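/- arXiv:2305.18543 — 3 statements merged into one kernel-verified Lean document; each statement's English description precedes it below -/
import Mathlib

section
/- Let (X, D) be a metric space and μ : X → ℝ a 1-Lipschitz function. Let x_* ∈ X satisfy μ(x) ≤ μ(x_*) for all x ∈ X. Let u, v ∈ X, let f_u, f_v be real numbers and r_u, r_v ≥ 0 real numbers such that |f_u − μ(u)| ≤ r_u, |f_v − μ(v)| ≤ r_v, and D(u, x_*) ≤ r_u. Then f_v − r_v ≤ f_u + 2·r_u. -/
/-! Every value of `μ` is at most `μ x_* ≤ μ u + D(u, x_*) ≤ μ u + r_u`, so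
`f_v - r_v ≤ μ v ≤ μ u + r_u ≤ f_u + 2 r_u`. -/

theorem le_add_dist_of_forall_le_of_abs_sub_le {X : Type*} [MetricSpace X] {μ : X → ℝ}
    (hlip : ∀ x y : X, |μ x - μ y| ≤ dist x y) {xstar : X} (hopt : ∀ x : X, μ x ≤ μ xstar)
    (u v : X) : μ v ≤ μ u + dist u xstar :=
  calc μ v ≤ μ xstar := hopt v
    _ ≤ μ u + dist u xstar := by
      linarith [(abs_le.mp (hlip xstar u)).2, dist_comm xstar u]

theorem stmt_4_general {X : Type*} [MetricSpace X] (μ : X → ℝ)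
    (hlip : ∀ x y : X, |μ x - μ y| ≤ dist x y)
    (xstar : X) (hopt : ∀ x : X, μ x ≤ μ xstar)
    (u v : X) (fu fv ru rv : ℝ)
    (hfu : |fu - μ u| ≤ ru) (hfv : |fv - μ v| ≤ rv)
    (hball : dist u xstar ≤ ru) :
    fv - rv ≤ fu + 2 * ru := by
  have hv : fv - rv ≤ μ v := by linarith [(abs_le.mp hfv).2]
  have hu : μ u ≤ fu + ru := by linarith [(abs_le.mp hfu).1]
  linarith [le_add_dist_of_forall_le_of_abs_sub_le hlip hopt u v]

/-- Under a clean process, the confidence ball containing the optimal arm can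
never be eliminated by the removal rule of the Robust Zooming algorithm. -/
theorem stmt_4 {X : Type*} [MetricSpace X] (μ : X → ℝ)
    (hlip : ∀ x y : X, |μ x - μ y| ≤ dist x y)
    (xstar : X) (hopt : ∀ x : X, μ x ≤ μ xstar)
    (u v : X) (fu fv ru rv : ℝ) (hru : 0 ≤ ru) (hrv : 0 ≤ rv)
    (hfu : |fu - μ u| ≤ ru) (hfv : |fv - μ v| ≤ rv)
    (hball : dist u xstar ≤ ru) :
    fv - rv ≤ fu + 2 * ru :=
  stmt_4_general μ hlip xstar hopt u v fu fv ru rv hfu hfv hball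
end

section
/- Let (X, D) be a metric space and μ : X → ℝ a 1-Lipschitz function. Let x_*, x', x ∈ X, let f, f' be real numbers and r, r' ≥ 0 real numbers such that |f − μ(x)| ≤ r, |f' − μ(x')| ≤ r', D(x_*, x') ≤ r', and f + 2·r ≥ f' + 2·r'. Then μ(x_*) − μ(x) ≤ 3·r. -/
theorem stmt_5_general {X : Type*} [MetricSpace X] (μ : X → ℝ)
    (hlip : ∀ x y : X, |μ x - μ y| ≤ dist x y)
    (xstar x' x : X) (f f' r r' : ℝ)
    (hf : |f - μ x| ≤ r) (hf' : |f' - μ x'| ≤ r')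
    (hball : dist xstar x' ≤ r') (hucb : f + 2 * r ≥ f' + 2 * r') :
    μ xstar - μ x ≤ 3 * r := by
  have hstar : μ xstar ≤ μ x' + r' := by
    linarith [(abs_le.mp (hlip xstar x')).2]
  have hx' : μ x' ≤ f' + r' := by linarith [(abs_le.mp hf').1]
  have hx : f ≤ μ x + r := by linarith [(abs_le.mp hf).2]
  rw [sub_le_iff_le_add']
  calc μ xstar ≤ f' + 2 * r' := by linarith
    _ ≤ f + 2 * r := hucb
    _ ≤ μ x + 3 * r := by linarith

/-- Under a clean process, if the optimal arm `xstar` lies in the confidence ball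
`B(x', r')` of some active arm `x'`, and arm `x` is selected by the UCB rule
maximizing `f(·) + 2r(·)`, then the suboptimality gap of `x` is at most `3 r`. -/
theorem stmt_5 {X : Type*} [MetricSpace X] (μ : X → ℝ)
    (hlip : ∀ x y : X, |μ x - μ y| ≤ dist x y)
    (xstar x' x : X) (f f' r r' : ℝ) (hr : 0 ≤ r) (hr' : 0 ≤ r')
    (hf : |f - μ x| ≤ r) (hf' : |f' - μ x'| ≤ r')
    (hball : dist xstar x' ≤ r') (hucb : f + 2 * r ≥ f' + 2 * r') :
    μ xstar - μ x ≤ 3 * r :=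
  stmt_5_general μ hlip xstar x' x f f' r r' hf hf' hball hucb
end

section
/- Let (Ω, 𝓕, P) be a probability space with a filtration (𝓕_t)_{t=0}^{T} for a positive integer T, and let C, C̃, δ be real numbers with 1 ≤ C ≤ C̃ and δ ∈ (0,1). For each t ∈ {1, …, T}, let c_t : Ω → [0,1] be 𝓕_{t−1}-measurable with Σ_{t=1}^T c_t ≤ C almost surely, and let B_t : Ω → {0,1} be 𝓕_t-measurable with P(B_t = 1 | 𝓕_{t−1}) = 1/C̃ almost surely. Then P( Σ_{t=1}^T B_t·c_t > ln(1/δ) + 2e − 1 ) ≤ δ. -/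
open MeasureTheory ProbabilityTheory

/-- Lemma 5 of the paper (adapted from Lykouris et al., Lemma 3.3): a layer with
tolerance level `C̃ ≥ C`, sampled with probability `1/C̃` at each round against an
adaptive adversary whose round-`t` corruption magnitude `c_t` is
`𝓕_{t−1}`-measurable with total budget `C`, suffers total observed corruption
more than `ln(1/δ) + 2e − 1` with probability at most `δ`. -/
theorem stmt_13 {Ω : Type*} [mΩ : MeasurableSpace Ω] (P : Measure Ω)
    [IsProbabilityMeasure P] (T : ℕ) (hT : 0 < T)
    (ℱ : Filtration ℕ mΩ) (C Ct δ : ℝ) (hC : 1 ≤ C) (hCCt : C ≤ Ct)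
    (hδ : δ ∈ Set.Ioo (0 : ℝ) 1)
    (c : ℕ → Ω → ℝ) (hc01 : ∀ t, 1 ≤ t → t ≤ T → ∀ ω, c t ω ∈ Set.Icc (0 : ℝ) 1)
    (hcmeas : ∀ t, 1 ≤ t → t ≤ T → Measurable[ℱ (t - 1)] (c t))
    (hcsum : ∀ᵐ ω ∂P, ∑ t ∈ Finset.Icc 1 T, c t ω ≤ C)
    (B : ℕ → Ω → ℝ) (hB01 : ∀ t, 1 ≤ t → t ≤ T → ∀ ω, B t ω = 0 ∨ B t ω = 1)
    (hBmeas : ∀ t, 1 ≤ t → t ≤ T → Measurable[ℱ t] (B t))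
    (hBcond : ∀ t, 1 ≤ t → t ≤ T →
      P[Set.indicator {ω | B t ω = 1} (fun _ => (1 : ℝ)) | ℱ (t - 1)]
        =ᵐ[P] fun _ => 1 / Ct) :
    P {ω | Real.log (1 / δ) + 2 * Real.exp 1 - 1 <
        ∑ t ∈ Finset.Icc 1 T, B t ω * c t ω} ≤ ENNReal.ofReal δ := by
  obtain ⟨hδ0, hδ1⟩ := hδ
  have hCt0 : (0:ℝ) < Ct := lt_of_lt_of_le one_pos (hC.trans hCCt)
  have he2 : (2:ℝ) ≤ Real.exp 1 := by have := Real.add_one_le_exp 1; linarith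
  set a : ℝ := (Real.exp 1 - 1) / Ct with ha_def
  have ha0 : 0 ≤ a := div_nonneg (by linarith) hCt0.le
  set f : ℕ → Ω → ℝ := fun s ω => Real.exp (B s ω * c s ω - a * c s ω) with hf_def
  set Y : ℕ → Ω → ℝ := fun t ω => ∏ s ∈ Finset.Icc 1 t, f s ω with hY_def
  -- basic bounds on factors
  have hfpos : ∀ s ω, 0 < f s ω := fun s ω => Real.exp_pos _
  have hfle : ∀ s, 1 ≤ s → s ≤ T → ∀ ω, f s ω ≤ Real.exp 1 := by
    intro s h1 h2 ω
    have hc := hc01 s h1 h2 ω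
    have hB := hB01 s h1 h2 ω
    apply Real.exp_le_exp.2
    have hac : 0 ≤ a * c s ω := mul_nonneg ha0 hc.1
    rcases hB with h | h <;> simp [h] <;> nlinarith [hc.1, hc.2]
  have hYpos : ∀ t ω, 0 < Y t ω := fun t ω => Finset.prod_pos fun s _ => hfpos s ω
  have hYle : ∀ t, t ≤ T → ∀ ω, Y t ω ≤ Real.exp 1 ^ t := by
    intro t ht ω
    calc Y t ω ≤ ∏ s ∈ Finset.Icc 1 t, Real.exp 1 := by
          apply Finset.prod_le_prod (fun s _ => (hfpos s ω).le)
          intro s hs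
          rw [Finset.mem_Icc] at hs
          exact hfle s hs.1 (hs.2.trans ht) ω
      _ ≤ Real.exp 1 ^ t := by
          rw [Finset.prod_const, Nat.card_Icc]
          exact pow_le_pow_right₀ (by linarith) (by omega)
  -- measurability
  have hfm : ∀ s t, 1 ≤ s → s ≤ t → t ≤ T → Measurable[ℱ t] (f s) := by
    intro s t h1 h2 h3
    have hBm : Measurable[ℱ t] (B s) := (hBmeas s h1 (h2.trans h3)).mono (ℱ.mono h2) le_rfl
    have hcm : Measurable[ℱ t] (c s) :=
      (hcmeas s h1 (h2.trans h3)).mono (ℱ.mono (le_trans (Nat.sub_le s 1) h2)) le_rfl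
    exact (Real.measurable_exp.comp ((hBm.mul hcm).sub (hcm.const_mul a)))
  have hYm : ∀ t, t ≤ T → Measurable[ℱ t] (Y t) := by
    intro t ht
    apply Finset.measurable_prod
    intro s hs
    rw [Finset.mem_Icc] at hs
    exact hfm s t hs.1 hs.2 ht
  have hYmΩ : ∀ t, t ≤ T → Measurable (Y t) := fun t ht => (hYm t ht).mono (ℱ.le t) le_rfl
  have hYint : ∀ t, t ≤ T → Integrable (Y t) P := by
    intro t ht
    refine Integrable.mono' (integrable_const (Real.exp 1 ^ t))
      (hYmΩ t ht).aestronglyMeasurable (ae_of_all _ fun ω => ?_)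
    rw [Real.norm_eq_abs, abs_of_pos (hYpos t ω)]
    exact hYle t ht ω
  -- key induction: E[Y t] ≤ 1
  have hI : ∀ t, t ≤ T → ∫ ω, Y t ω ∂P ≤ 1 := by
    intro t
    induction t with
    | zero => intro _; simp [hY_def]
    | succ n ih =>
      intro hn
      have hn' : n ≤ T := Nat.le_of_succ_le hn
      have h1n : 1 ≤ n + 1 := Nat.le_add_left 1 n
      have hcn : Measurable[ℱ n] (c (n+1)) := by
        have := hcmeas (n+1) h1n hn; simpa using this
      have hcnΩ : Measurable (c (n+1)) := hcn.mono (ℱ.le n) le_rfl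
      set g : Ω → ℝ := fun ω => Y n ω * Real.exp (-(a * c (n+1) ω)) with hg_def
      set h : Ω → ℝ := fun ω => g ω * (Real.exp (c (n+1) ω) - 1) with hh_def
      set ind : Ω → ℝ := Set.indicator {ω | B (n+1) ω = 1} (fun _ => (1:ℝ)) with hind_def
      -- pointwise decomposition
      have hdecomp : ∀ ω, Y (n+1) ω = g ω + h ω * ind ω := by
        intro ω
        have hsplit : Y (n+1) ω = Y n ω * f (n+1) ω := by
          simp only [hY_def]
          exact Finset.prod_Icc_succ_top h1n _
        rcases hB01 (n+1) h1n hn ω with hB | hB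
        · have hmem : ω ∉ {ω | B (n+1) ω = 1} := by simp [hB]
          rw [hsplit]
          simp only [hind_def, Set.indicator_of_notMem hmem, mul_zero, add_zero,
            hg_def, hf_def, hB, zero_mul, zero_sub]
        · have hmem : ω ∈ {ω | B (n+1) ω = 1} := hB
          rw [hsplit]
          simp only [hind_def, Set.indicator_of_mem hmem, mul_one, hh_def, hg_def,
            hf_def, hB, one_mul]
          rw [show c (n+1) ω - a * c (n+1) ω = -(a * c (n+1) ω) + c (n+1) ω by ring,
            Real.exp_add]
          ring
      -- measurability and bounds for g, h
      have hgm : Measurable[ℱ n] g :=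
        (hYm n hn').mul (Real.measurable_exp.comp (hcn.const_mul a).neg)
      have hgpos : ∀ ω, 0 < g ω := fun ω => mul_pos (hYpos n ω) (Real.exp_pos _)
      have hgle : ∀ ω, g ω ≤ Real.exp 1 ^ n := by
        intro ω
        have h1 : Real.exp (-(a * c (n+1) ω)) ≤ 1 := by
          rw [Real.exp_le_one_iff]
          exact neg_nonpos.2 (mul_nonneg ha0 (hc01 (n+1) h1n hn ω).1)
        calc g ω ≤ Y n ω * 1 := by
              exact mul_le_mul_of_nonneg_left h1 (hYpos n ω).le
          _ = Y n ω := mul_one _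
          _ ≤ Real.exp 1 ^ n := hYle n hn' ω
      have hhm : Measurable[ℱ n] h :=
        hgm.mul ((Real.measurable_exp.comp hcn).sub measurable_const)
      have hhnn : ∀ ω, 0 ≤ h ω := by
        intro ω
        apply mul_nonneg (hgpos ω).le
        have := (hc01 (n+1) h1n hn ω).1
        have : (1:ℝ) ≤ Real.exp (c (n+1) ω) := Real.one_le_exp this
        linarith
      have hhle : ∀ ω, h ω ≤ Real.exp 1 ^ n * (Real.exp 1 - 1) := by
        intro ω
        have hc := hc01 (n+1) h1n hn ω
        have h1 : Real.exp (c (n+1) ω) ≤ Real.exp 1 := Real.exp_le_exp.2 hc.2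
        apply mul_le_mul (hgle ω) (by linarith) (by
          have : (1:ℝ) ≤ Real.exp (c (n+1) ω) := Real.one_le_exp hc.1
          linarith) (by positivity)
      have hgmΩ : Measurable g := hgm.mono (ℱ.le n) le_rfl
      have hhmΩ : Measurable h := hhm.mono (ℱ.le n) le_rfl
      have hgint : Integrable g P := by
        refine Integrable.mono' (integrable_const (Real.exp 1 ^ n))
          hgmΩ.aestronglyMeasurable (ae_of_all _ fun ω => ?_)
        rw [Real.norm_eq_abs, abs_of_pos (hgpos ω)]; exact hgle ω
      have hhint : Integrable h P := by
        refine Integrable.mono' (integrable_const (Real.exp 1 ^ n * (Real.exp 1 - 1)))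
          hhmΩ.aestronglyMeasurable (ae_of_all _ fun ω => ?_)
        rw [Real.norm_eq_abs, abs_of_nonneg (hhnn ω)]; exact hhle ω
      have hindm : Measurable ind := by
        have hBm : Measurable (B (n+1)) := (hBmeas (n+1) h1n hn).mono (ℱ.le (n+1)) le_rfl
        exact (measurable_const.indicator (hBm (measurableSet_singleton 1)))
      have hindb : ∀ ω, 0 ≤ ind ω ∧ ind ω ≤ 1 := by
        intro ω
        simp only [hind_def]
        by_cases hω : ω ∈ {ω | B (n+1) ω = 1} <;>
          simp [Set.indicator_of_mem, Set.indicator_of_notMem, hω]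
      have hindint : Integrable ind P := by
        refine Integrable.mono' (integrable_const 1)
          hindm.aestronglyMeasurable (ae_of_all _ fun ω => ?_)
        rw [Real.norm_eq_abs, abs_of_nonneg (hindb ω).1]; exact (hindb ω).2
      have hhi_int : Integrable (h * ind) P := by
        refine Integrable.mono' (integrable_const (Real.exp 1 ^ n * (Real.exp 1 - 1)))
          (hhmΩ.mul hindm).aestronglyMeasurable (ae_of_all _ fun ω => ?_)
        simp only [Pi.mul_apply, Real.norm_eq_abs,
          abs_of_nonneg (mul_nonneg (hhnn ω) (hindb ω).1)]
        calc h ω * ind ω ≤ h ω * 1 := mul_le_mul_of_nonneg_left (hindb ω).2 (hhnn ω)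
          _ = h ω := mul_one _
          _ ≤ _ := hhle ω
      -- the conditional expectation step
      have hcond := hBcond (n+1) h1n hn
      simp only [Nat.add_sub_cancel] at hcond
      have hpull : P[h * ind | ℱ n] =ᵐ[P] h * P[ind | ℱ n] :=
        condExp_mul_of_stronglyMeasurable_left hhm.stronglyMeasurable hhi_int hindint
      have hEint : ∫ ω, h ω * ind ω ∂P = ∫ ω, h ω * (1 / Ct) ∂P := by
        have h1 : ∫ ω, (h * ind) ω ∂P = ∫ ω, (P[h * ind | ℱ n]) ω ∂P :=
          (integral_condExp (ℱ.le n)).symm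
        rw [show ∫ ω, h ω * ind ω ∂P = ∫ ω, (h * ind) ω ∂P from rfl, h1]
        apply integral_congr_ae
        filter_upwards [hpull, hcond] with ω h1 h2
        rw [h1]
        simp only [Pi.mul_apply, hind_def, h2]
      -- assemble
      have hsum : ∫ ω, Y (n+1) ω ∂P = ∫ ω, (g ω + h ω * (1/Ct)) ∂P := by
        calc ∫ ω, Y (n+1) ω ∂P = ∫ ω, (g ω + h ω * ind ω) ∂P :=
              integral_congr_ae (ae_of_all _ hdecomp)
          _ = ∫ ω, g ω ∂P + ∫ ω, h ω * ind ω ∂P :=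
              integral_add hgint (by exact hhi_int :
                Integrable (fun ω => h ω * ind ω) P)
          _ = ∫ ω, g ω ∂P + ∫ ω, h ω * (1/Ct) ∂P := by rw [hEint]
          _ = ∫ ω, (g ω + h ω * (1/Ct)) ∂P :=
              (integral_add hgint (hhint.mul_const (1/Ct))).symm
      rw [hsum]
      -- pointwise: g + h/Ct ≤ Y n
      have hpt : ∀ ω, g ω + h ω * (1/Ct) ≤ Y n ω := by
        intro ω
        have hc := hc01 (n+1) h1n hn ω
        have hconv : Real.exp (c (n+1) ω) ≤ 1 + (Real.exp 1 - 1) * c (n+1) ω := by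
          have := convexOn_exp.2 (Set.mem_univ (0:ℝ)) (Set.mem_univ (1:ℝ))
            (by linarith [hc.2] : (0:ℝ) ≤ 1 - c (n+1) ω) hc.1 (by ring)
          simp only [smul_eq_mul, mul_zero, mul_one, zero_add, Real.exp_zero] at this
          linarith
        have hstep : 1 + (Real.exp (c (n+1) ω) - 1) * (1/Ct) ≤ Real.exp (a * c (n+1) ω) := by
          have h1 : (Real.exp (c (n+1) ω) - 1) * (1/Ct) ≤ a * c (n+1) ω := by
            rw [ha_def, mul_one_div, div_mul_eq_mul_div]
            gcongr
            linarith
          have h2 : a * c (n+1) ω + 1 ≤ Real.exp (a * c (n+1) ω) :=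
            Real.add_one_le_exp _
          linarith
        have hY : Y n ω = g ω * Real.exp (a * c (n+1) ω) := by
          simp only [hg_def]
          rw [mul_assoc, ← Real.exp_add]
          simp
        calc g ω + h ω * (1/Ct)
            = g ω * (1 + (Real.exp (c (n+1) ω) - 1) * (1/Ct)) := by
              simp only [hh_def]; ring
          _ ≤ g ω * Real.exp (a * c (n+1) ω) :=
              mul_le_mul_of_nonneg_left hstep (hgpos ω).le
          _ = Y n ω := hY.symm
      calc ∫ ω, (g ω + h ω * (1/Ct)) ∂P ≤ ∫ ω, Y n ω ∂P :=
            integral_mono (hgint.add (hhint.mul_const _)) (hYint n hn') hpt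
        _ ≤ 1 := ih hn'
  -- Markov
  have hmain := hI T le_rfl
  have hmarkov := mul_meas_ge_le_integral_of_nonneg
    (ae_of_all P fun ω => (hYpos T ω).le) (hYint T le_rfl) (1/δ)
  have hPfin : P {x | 1/δ ≤ Y T x} ≠ ⊤ := measure_ne_top _ _
  have htoReal : (P {x | 1/δ ≤ Y T x}).toReal ≤ δ := by
    have h1δ : (0:ℝ) < 1/δ := by positivity
    have := hmarkov.trans hmain
    calc (P {x | 1/δ ≤ Y T x}).toReal
        = δ * ((1/δ) * (P {x | 1/δ ≤ Y T x}).toReal) := by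
          rw [← mul_assoc, mul_one_div_cancel (ne_of_gt hδ0), one_mul]
      _ ≤ δ * 1 := by
          apply mul_le_mul_of_nonneg_left this hδ0.le
      _ = δ := mul_one _
  have hsub : ∀ᵐ ω ∂P, ω ∈ {ω | Real.log (1 / δ) + 2 * Real.exp 1 - 1 <
      ∑ t ∈ Finset.Icc 1 T, B t ω * c t ω} → ω ∈ {x | 1/δ ≤ Y T x} := by
    filter_upwards [hcsum] with ω hωc hωA
    replace hωA : Real.log (1 / δ) + 2 * Real.exp 1 - 1 <
      ∑ t ∈ Finset.Icc 1 T, B t ω * c t ω := hωA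
    show 1/δ ≤ Y T ω
    have hYeq : Y T ω = Real.exp (∑ t ∈ Finset.Icc 1 T, (B t ω * c t ω - a * c t ω)) :=
      (Real.exp_sum _ _).symm
    have hsplit : ∑ t ∈ Finset.Icc 1 T, (B t ω * c t ω - a * c t ω)
        = (∑ t ∈ Finset.Icc 1 T, B t ω * c t ω) - a * ∑ t ∈ Finset.Icc 1 T, c t ω := by
      rw [Finset.sum_sub_distrib, Finset.mul_sum]
    have haC : a * ∑ t ∈ Finset.Icc 1 T, c t ω ≤ Real.exp 1 - 1 := by
      have h1 : a * ∑ t ∈ Finset.Icc 1 T, c t ω ≤ a * C := by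
        apply mul_le_mul_of_nonneg_left hωc ha0
      have h2 : a * C ≤ Real.exp 1 - 1 := by
        rw [ha_def, div_mul_eq_mul_div, div_le_iff₀ hCt0]
        nlinarith
      linarith
    have hexp : Real.log (1/δ) ≤ (∑ t ∈ Finset.Icc 1 T, B t ω * c t ω)
        - a * ∑ t ∈ Finset.Icc 1 T, c t ω := by
      nlinarith [he2]
    rw [hYeq, hsplit]
    calc 1/δ = Real.exp (Real.log (1/δ)) := (Real.exp_log (by positivity)).symm
      _ ≤ _ := Real.exp_le_exp.2 hexp
  calc P _ ≤ P {x | 1/δ ≤ Y T x} := measure_mono_ae hsub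
    _ ≤ ENNReal.ofReal δ := by
        rw [← ENNReal.ofReal_toReal hPfin]
        exact ENNReal.ofReal_le_ofReal htoReal
end
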